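/- Under the hypotheses of the abstract restriction theorem, with T f := f ∗ μ̌ and the decomposition T = T₁ + T₂ given by μ̌₁ = φ_ρ μ̌, μ̌₂ = (1-φ_ρ)μ̌, the low-frequency part satisfies for every Borel E ⊆ G: ‖T₁χ_E‖²_{L²(G)} ≲_{n,a,b} (C₁+C₂)^{2-θ} C₃ A^{2-θ} B^{θ} m(E)^{2/r₀} ρ^{n-a}, where θ = 2(n-a)/(2(n-a)+b) and r₀ = (4(n-a)+2b)/(4(n-a)+b). -/

import Mathlib

/-!
Write `μ̌ = fourierInv e w` and `K = φ_ρ · μ̌`, so that `K̂ = w ∗ φ̂_ρ`. By Plancherel,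
`‖χ_E ∗ K‖₂² = |G|⁻¹ ∑_ξ |χ̂_E ξ|² |K̂ ξ|²`. One factor `|K̂|` is bounded uniformly by
`≲ (C₁ + C₂) A ρ^(n-a)`: decompose `H` into the dyadic shells of `BH` around `ξ`, on which `w`
has mass `≲ A r^a` by (Fμ) and `φ̂_ρ` is `≲ C₂ r^(-n)`, and sum the geometric series (`a < n`).
The other factor is bounded by `w ∗ |φ̂_ρ|`; after Fubini, each translate `τ` contributes
`∑_ζ w ζ |χ̂_E (ζ + τ)|²`, the restriction quantity of the modulated indicator `χ_E e(-·, τ)`.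
Splitting `μ̌ = φ_r μ̌ + (1 - φ_r) μ̌` at an arbitrary scale `r` and using (Rμ) on the second
piece bounds it by `X r^(n-a) + Y r^(-b/2)` with `X ≍ |E|`, `Y ≍ |E|²`; optimising in `r` gives
`2 X^(1-θ) Y^θ`, whence `|E|^(1+θ) = |E|^(2/r₀)`. The remaining `|G|⁻¹ ∑_τ |φ̂_ρ τ|` is (F′).
-/

open scoped ComplexConjugate

namespace FinitePairing

lemma exists_mem_dyadic {H : Type*} {BH : ℝ → Set H}
    (hBHmono : ∀ ρ ρ' : ℝ, 0 < ρ → ρ ≤ ρ' → BH ρ ⊆ BH ρ')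
    (hBHcov : ∀ ξ : H, ∃ ρ : ℝ, 0 < ρ ∧ ξ ∈ BH ρ) {ρ : ℝ} (hρ : 0 < ρ) (ζ : H) :
    ∃ j : ℕ, ζ ∈ BH (2 ^ j / ρ) := by
  obtain ⟨s, hs, hmem⟩ := hBHcov ζ
  obtain ⟨j, hj⟩ := pow_unbounded_of_one_lt (s * ρ) one_lt_two
  exact ⟨j, hBHmono s _ hs ((le_div_iff₀ hρ).2 hj.le) hmem⟩

lemma two_div_rpow_mul_rpow_dyadic {ρ : ℝ} (hρ : 0 < ρ) (n a : ℝ) (j : ℕ) :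
    (2 / (2 ^ j / ρ)) ^ n * (2 ^ j / ρ) ^ a = 2 ^ n * ρ ^ (n - a) * (2 ^ (a - n)) ^ j := by
  have hR : 0 < (2 : ℝ) ^ j / ρ := by positivity
  rw [Real.div_rpow zero_le_two hR.le, div_mul_eq_mul_div, mul_div_assoc, ← Real.rpow_sub hR,
    Real.div_rpow (by positivity) hρ.le, ← Real.rpow_pow_comm zero_le_two, div_eq_mul_inv,
    ← Real.rpow_neg hρ.le, neg_sub]
  ring

lemma sum_le_of_sum_fiber_le_geometric {ι : Type*} [Fintype ι] (f : ι → ℝ) (k : ι → ℕ)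
    {c r : ℝ} (hc : 0 ≤ c) (hr0 : 0 ≤ r) (hr1 : r < 1)
    (hfiber : ∀ j, ∑ i with k i = j, f i ≤ c * r ^ j) :
    ∑ i, f i ≤ c / (1 - r) := by
  set N := Finset.univ.sup k + 1
  have hmaps : ∀ i ∈ (Finset.univ : Finset ι), k i ∈ Finset.range N := fun i _ =>
    Finset.mem_range.2 (Nat.lt_succ_of_le (Finset.le_sup (Finset.mem_univ i)))
  calc ∑ i, f i = ∑ j ∈ Finset.range N, ∑ i with k i = j, f i :=
        (Finset.sum_fiberwise_of_maps_to hmaps f).symm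
    _ ≤ ∑ j ∈ Finset.range N, c * r ^ j := Finset.sum_le_sum fun j _ => hfiber j
    _ ≤ c * (r ^ 0 / (1 - r)) := by
        rw [← Finset.mul_sum, Finset.range_eq_Ico]
        exact mul_le_mul_of_nonneg_left (geom_sum_Ico_le_of_lt_one hr0 hr1) hc
    _ = c / (1 - r) := by ring

lemma sum_mul_le_of_dyadic_decay {H : Type*} [AddCommGroup H] [Fintype H]
    {BH : ℝ → Set H} (hBHmono : ∀ ρ ρ' : ℝ, 0 < ρ → ρ ≤ ρ' → BH ρ ⊆ BH ρ')
    (hBHcov : ∀ ξ : H, ∃ ρ : ℝ, 0 < ρ ∧ ξ ∈ BH ρ)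
    {w h : H → ℝ} (hw : ∀ ξ, 0 ≤ w ξ) {ξ : H} {n a A C ρ : ℝ} (han : a < n)
    (hA : 0 ≤ A) (hC : 0 ≤ C) (hρ : 0 < ρ)
    (hFmu : ∀ s : ℝ, 0 < s →
      ∑ η : H, Set.indicator (BH s) (fun _ => (1 : ℝ)) (η - ξ) * w η ≤ A * s ^ a)
    (hunif : ∀ η, h η ≤ C * (2 * ρ) ^ n)
    (hdecay : ∀ s : ℝ, 1 / ρ ≤ s → ∀ η, η - ξ ∉ BH s → h η ≤ C * s ^ (-n)) :
    ∑ η, w η * h η ≤ 2 ^ n / (1 - 2 ^ (a - n)) * C * A * ρ ^ (n - a) := by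
  classical
  have hex := fun η => exists_mem_dyadic hBHmono hBHcov hρ (η - ξ)
  set k : H → ℕ := fun η => Nat.find (hex η)
  -- `η` lies in the `k η`-th dyadic ball but not in the previous one, where `h` has decayed
  have hbound : ∀ η, h η ≤ C * (2 / (2 ^ k η / ρ)) ^ n := by
    intro η
    rcases hk : k η with _ | i
    · simpa [div_div_eq_mul_div] using hunif η
    · have hout : η - ξ ∉ BH (2 ^ i / ρ) := Nat.find_min (hex η) (show i < k η by omega)
      have hs : 1 / ρ ≤ 2 ^ i / ρ := div_le_div_of_nonneg_right (one_le_pow₀ one_le_two) hρ.le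
      have hprev : 2 / (2 ^ (i + 1) / ρ) = (2 ^ i / ρ)⁻¹ := by rw [pow_succ]; field_simp
      rw [hprev, Real.inv_rpow (by positivity), ← Real.rpow_neg (by positivity)]
      exact hdecay _ hs η hout
  have hweight : ∀ j, ∑ η with k η = j, w η ≤ A * (2 ^ j / ρ) ^ a := by
    intro j
    calc ∑ η with k η = j, w η
        = ∑ η with k η = j, Set.indicator (BH (2 ^ j / ρ)) (fun _ => (1 : ℝ)) (η - ξ) * w η := by
          refine Finset.sum_congr rfl fun η hη => ?_
          have hmem : η - ξ ∈ BH (2 ^ j / ρ) := (Finset.mem_filter.1 hη).2 ▸ Nat.find_spec (hex η)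
          rw [Set.indicator_of_mem hmem, one_mul]
      _ ≤ ∑ η, Set.indicator (BH (2 ^ j / ρ)) (fun _ => (1 : ℝ)) (η - ξ) * w η :=
          Finset.sum_le_sum_of_subset_of_nonneg (Finset.filter_subset _ _) fun η _ _ =>
            mul_nonneg (Set.indicator_nonneg (fun _ _ => zero_le_one) _) (hw η)
      _ ≤ A * (2 ^ j / ρ) ^ a := hFmu _ (by positivity)
  have hr1 : (2 : ℝ) ^ (a - n) < 1 := Real.rpow_lt_one_of_one_lt_of_neg one_lt_two (by linarith)
  calc ∑ η, w η * h η ≤ (C * A * 2 ^ n * ρ ^ (n - a)) / (1 - 2 ^ (a - n)) := by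
        refine sum_le_of_sum_fiber_le_geometric _ k (by positivity) (by positivity) hr1 fun j => ?_
        calc ∑ η with k η = j, w η * h η ≤ ∑ η with k η = j, w η * (C * (2 / (2 ^ j / ρ)) ^ n) :=
              Finset.sum_le_sum fun η hη => mul_le_mul_of_nonneg_left
                ((Finset.mem_filter.1 hη).2 ▸ hbound η) (hw η)
          _ ≤ A * (2 ^ j / ρ) ^ a * (C * (2 / (2 ^ j / ρ)) ^ n) := by
              rw [← Finset.sum_mul]
              exact mul_le_mul_of_nonneg_right (hweight j) (by positivity)
          _ = C * A * ((2 / (2 ^ j / ρ)) ^ n * (2 ^ j / ρ) ^ a) := by ring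
          _ = C * A * 2 ^ n * ρ ^ (n - a) * (2 ^ (a - n)) ^ j := by
              rw [two_div_rpow_mul_rpow_dyadic hρ]
              ring
    _ = 2 ^ n / (1 - 2 ^ (a - n)) * C * A * ρ ^ (n - a) := by ring

lemma mul_div_rpow_eq {X Y : ℝ} (hX : 0 < X) (hY : 0 < Y) (q : ℝ) :
    X * (Y / X) ^ q = X ^ (1 - q) * Y ^ q := by
  rw [Real.div_rpow hY.le hX.le, Real.rpow_sub hX, Real.rpow_one]
  field_simp

lemma le_two_mul_rpow_mul_rpow_of_forall_le_of_pos {α β X Y T : ℝ} (hα : 0 < α) (hβ : 0 < β)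
    (hX : 0 < X) (hY : 0 < Y) (hT : ∀ ρ : ℝ, 0 < ρ → T ≤ X * ρ ^ α + Y * ρ ^ (-β)) :
    T ≤ 2 * X ^ (β / (α + β)) * Y ^ (α / (α + β)) := by
  have hαβ : α + β ≠ 0 := by positivity
  have hYX : 0 < Y / X := div_pos hY hX
  -- the two terms balance at `ρ = (Y / X) ^ (1 / (α + β))`
  have hX_term : X * ((Y / X) ^ (1 / (α + β))) ^ α = X ^ (β / (α + β)) * Y ^ (α / (α + β)) := by
    rw [← Real.rpow_mul hYX.le, mul_div_rpow_eq hX hY]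
    congr 2
    · field_simp
      ring
    · field_simp
  have hY_term : Y * ((Y / X) ^ (1 / (α + β))) ^ (-β) = X ^ (β / (α + β)) * Y ^ (α / (α + β)) := by
    rw [← Real.rpow_mul hYX.le, show 1 / (α + β) * -β = -(β / (α + β)) by ring,
      Real.rpow_neg hYX.le, ← Real.inv_rpow hYX.le, inv_div, mul_div_rpow_eq hY hX, mul_comm]
    congr 2
    field_simp
    ring
  calc T ≤ X * ((Y / X) ^ (1 / (α + β))) ^ α + Y * ((Y / X) ^ (1 / (α + β))) ^ (-β) :=
        hT _ (Real.rpow_pos_of_pos hYX _)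
    _ = 2 * X ^ (β / (α + β)) * Y ^ (α / (α + β)) := by rw [hX_term, hY_term]; ring

lemma le_two_mul_rpow_mul_rpow_of_forall_le {α β X Y T : ℝ} (hα : 0 < α) (hβ : 0 < β)
    (hX : 0 ≤ X) (hY : 0 ≤ Y) (hT : ∀ ρ : ℝ, 0 < ρ → T ≤ X * ρ ^ α + Y * ρ ^ (-β)) :
    T ≤ 2 * X ^ (β / (α + β)) * Y ^ (α / (α + β)) := by
  set F : ℝ → ℝ := fun ε => 2 * (X + ε) ^ (β / (α + β)) * (Y + ε) ^ (α / (α + β))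
  have hF : ContinuousAt F 0 := by
    have hp : 0 ≤ β / (α + β) := by positivity
    have hq : 0 ≤ α / (α + β) := by positivity
    exact (continuousAt_const.mul ((continuousAt_const.add continuousAt_id).rpow_const
      (Or.inr hp))).mul ((continuousAt_const.add continuousAt_id).rpow_const (Or.inr hq))
  have hle : ∀ ε > 0, T ≤ F ε := fun ε hε =>
    le_two_mul_rpow_mul_rpow_of_forall_le_of_pos hα hβ (by positivity) (by positivity)
      fun ρ hρ => (hT ρ hρ).trans (by gcongr <;> linarith)
  have hlim := hF.tendsto.mono_left (nhdsWithin_le_nhds (s := Set.Ioi 0))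
  simpa [F] using ge_of_tendsto hlim (eventually_nhdsWithin_of_forall fun ε hε => hle ε hε)

lemma sum_abs_le_ncard {G : Type*} [Fintype G] {f : G → ℝ} {S : Set G}
    (hS : ∀ x, f x ≠ 0 → x ∈ S) (hf : ∀ x, |f x| ≤ 1) : ∑ x, |f x| ≤ S.ncard := by
  classical
  calc ∑ x, |f x| ≤ ∑ x, if x ∈ S then (1 : ℝ) else 0 := Finset.sum_le_sum fun x _ => by
        by_cases hx : x ∈ S
        · simpa [hx] using hf x
        · simp [hx, show f x = 0 by by_contra h; exact hx (hS x h)]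
    _ = S.ncard := by simp [Finset.sum_boole, Set.ncard_eq_toFinset_card']

lemma sum_norm_indicator_mul {G : Type*} [Fintype G] {E : Set G} {u : G → ℂ}
    (hu : ∀ x, ‖u x‖ = 1) (p : ℕ) (hp : p ≠ 0) :
    ∑ x, ‖E.indicator (fun _ => (1 : ℂ)) x * u x‖ ^ p = E.ncard := by
  classical
  simp [Set.indicator_apply, apply_ite, hu, hp, Finset.sum_boole, Set.ncard_eq_toFinset_card']

lemma mul_rpow_one_sub_self {x θ : ℝ} (hx : 0 ≤ x) (hθ : θ ≤ 1) :
    x * x ^ (1 - θ) = x ^ (2 - θ) := by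
  rw [show 2 - θ = 1 + (1 - θ) by ring, Real.rpow_add' hx (by linarith), Real.rpow_one]

lemma restriction_bound_eq {c C A B N P C₃ θ : ℝ} (hc : 0 ≤ c) (hC : 0 ≤ C) (hA : 0 ≤ A)
    (hB : 0 ≤ B) (hN : 0 ≤ N) (hθ0 : 0 ≤ θ) (hθ1 : θ ≤ 1) :
    c * C * A * P * (2 * (c * C * A * N) ^ (1 - θ) * (2 * B * N ^ 2) ^ θ) * C₃
      = 2 ^ (1 + θ) * c ^ (2 - θ) * C ^ (2 - θ) * C₃ * A ^ (2 - θ) * B ^ θ * N ^ (1 + θ) * P := by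
  have hcCA : c * C * A * (c * C * A) ^ (1 - θ) = c ^ (2 - θ) * C ^ (2 - θ) * A ^ (2 - θ) := by
    rw [mul_rpow_one_sub_self (by positivity) hθ1, Real.mul_rpow (by positivity) hA,
      Real.mul_rpow hc hC]
  have hN' : N ^ (1 - θ) * (N ^ 2) ^ θ = N ^ (1 + θ) := by
    rw [← Real.rpow_natCast, ← Real.rpow_mul hN, ← Real.rpow_add' hN (by push_cast; linarith)]
    ring_nf
  have h2 : 2 * (2 : ℝ) ^ θ = 2 ^ (1 + θ) := by
    rw [Real.rpow_add' zero_le_two (by linarith), Real.rpow_one]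
  rw [Real.mul_rpow (x := c * C * A) (by positivity) hN,
    Real.mul_rpow (x := 2 * B) (by positivity) (by positivity), Real.mul_rpow zero_le_two hB]
  calc c * C * A * P * (2 * ((c * C * A) ^ (1 - θ) * N ^ (1 - θ))
          * (2 ^ θ * B ^ θ * (N ^ 2) ^ θ)) * C₃
      = 2 * 2 ^ θ * (c * C * A * (c * C * A) ^ (1 - θ)) * B ^ θ * (N ^ (1 - θ) * (N ^ 2) ^ θ)
          * P * C₃ := by ring
    _ = _ := by rw [hcCA, hN', h2]; ring

variable {G H : Type} [AddCommGroup G] [AddCommGroup H]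

structure IsUnitBicharacter (e : G → H → ℂ) : Prop where
  map_add_left : ∀ (x y : G) (ξ : H), e (x + y) ξ = e x ξ * e y ξ
  map_add_right : ∀ (x : G) (ξ η : H), e x (ξ + η) = e x ξ * e x η
  norm_eq_one : ∀ (x : G) (ξ : H), ‖e x ξ‖ = 1

noncomputable def fourier [Fintype G] (e : G → H → ℂ) (f : G → ℂ) (ξ : H) : ℂ :=
  ∑ x, f x * e (-x) ξ

noncomputable def fourierInv [Fintype H] (e : G → H → ℂ) (ν : H → ℂ) (x : G) : ℂ :=
  ∑ ξ, ν ξ * e x ξ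

noncomputable def conv [Fintype G] (f K : G → ℂ) (x : G) : ℂ := ∑ y, f y * K (x - y)

lemma conv_add [Fintype G] (f K₁ K₂ : G → ℂ) : conv f (K₁ + K₂) = conv f K₁ + conv f K₂ := by
  ext x
  simp only [conv, Pi.add_apply, mul_add, Finset.sum_add_distrib]

lemma norm_sum_conj_mul_conv_le [Fintype G] {K : G → ℂ} {M : ℝ} (hK : ∀ x, ‖K x‖ ≤ M)
    (g : G → ℂ) : ‖∑ y, conj (g y) * conv g K y‖ ≤ M * (∑ x, ‖g x‖) ^ 2 := by
  have hconv : ∀ y, ‖conv g K y‖ ≤ M * ∑ x, ‖g x‖ := fun y => by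
    rw [Finset.mul_sum]
    refine (norm_sum_le _ _).trans (Finset.sum_le_sum fun x _ => ?_)
    rw [norm_mul, mul_comm]
    exact mul_le_mul_of_nonneg_right (hK _) (norm_nonneg _)
  calc ‖∑ y, conj (g y) * conv g K y‖ ≤ ∑ y, ‖g y‖ * (M * ∑ x, ‖g x‖) :=
        (norm_sum_le _ _).trans (Finset.sum_le_sum fun y _ => by
          rw [norm_mul, Complex.norm_conj]
          exact mul_le_mul_of_nonneg_left (hconv y) (norm_nonneg _))
    _ = M * (∑ x, ‖g x‖) ^ 2 := by rw [← Finset.sum_mul]; ring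

lemma sum_mul_sum_mul_sub [Fintype H] (u v w : H → ℝ) :
    ∑ ξ, u ξ * ∑ η, w η * v (ξ - η) = ∑ τ, v τ * ∑ ζ, w ζ * u (ζ + τ) := by
  simp only [Finset.mul_sum]
  rw [Finset.sum_comm]
  conv_rhs => rw [Finset.sum_comm]
  refine Finset.sum_congr rfl fun η _ => Fintype.sum_equiv (Equiv.subRight η) _ _ fun ξ => ?_
  simp only [Equiv.subRight_apply, add_sub_cancel]
  ring

namespace IsUnitBicharacter

variable {e : G → H → ℂ} (he : IsUnitBicharacter e)
include he

lemma ne_zero (x : G) (ξ : H) : e x ξ ≠ 0 := by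
  intro h
  simpa [h] using he.norm_eq_one x ξ

lemma map_zero_left (ξ : H) : e 0 ξ = 1 := by
  have h := he.map_add_left 0 0 ξ
  rw [add_zero] at h
  exact mul_left_cancel₀ (he.ne_zero 0 ξ) (h.symm.trans (mul_one _).symm)

lemma map_neg_left_mul (x : G) (ξ : H) : e (-x) ξ * e x ξ = 1 := by
  rw [← he.map_add_left, neg_add_cancel, he.map_zero_left]

lemma conj_eq (x : G) (ξ : H) : conj (e x ξ) = e (-x) ξ := by
  refine mul_right_cancel₀ (he.ne_zero x ξ) ((he.map_neg_left_mul x ξ).symm ▸ ?_)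
  rw [mul_comm, Complex.mul_conj', he.norm_eq_one]
  norm_num

lemma map_neg_right (x : G) (ξ : H) : e x (-ξ) = e (-x) ξ := by
  have h0 : e x 0 = 1 := by
    have h := he.map_add_right x 0 0
    rw [add_zero] at h
    exact mul_left_cancel₀ (he.ne_zero x 0) (h.symm.trans (mul_one _).symm)
  refine mul_right_cancel₀ (he.ne_zero x ξ) ?_
  rw [← he.map_add_right, neg_add_cancel, h0, he.map_neg_left_mul]

variable [Fintype G]

lemma fourier_conv (f K : G → ℂ) (ξ : H) :
    fourier e (conv f K) ξ = fourier e f ξ * fourier e K ξ := by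
  simp only [fourier, conv]
  rw [Finset.sum_mul_sum]
  simp only [Finset.sum_mul]
  rw [Finset.sum_comm]
  refine Finset.sum_congr rfl fun y _ => ?_
  refine Fintype.sum_equiv (Equiv.subRight y) _ _ fun x => ?_
  have h : e (-x) ξ = e (-y) ξ * e (-(x - y)) ξ := by rw [← he.map_add_left]; congr 1; abel
  simp only [Equiv.subRight_apply, h]
  ring

lemma fourier_modulate (f : G → ℂ) (τ ζ : H) :
    fourier e (fun x => f x * e (-x) τ) ζ = fourier e f (ζ + τ) := by
  simp only [fourier, he.map_add_right, mul_comm (e _ ζ), mul_assoc]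

lemma fourier_mul_conj_fourier (f g : G → ℂ) (ξ : H) :
    fourier e f ξ * conj (fourier e g ξ) = ∑ x, ∑ y, f x * conj (g y) * e (y - x) ξ := by
  simp only [fourier, map_sum, map_mul, he.conj_eq, neg_neg, Finset.sum_mul_sum, sub_eq_add_neg,
    he.map_add_left]
  exact Finset.sum_congr rfl fun x _ => Finset.sum_congr rfl fun y _ => by ring

lemma sum_fourier_mul_conj [Fintype H] [DecidableEq G]
    (horth : ∀ x : G, ∑ ξ : H, e x ξ = if x = 0 then (Fintype.card G : ℂ) else 0)
    (f g : G → ℂ) :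
    ∑ ξ, fourier e f ξ * conj (fourier e g ξ) = Fintype.card G * ∑ x, f x * conj (g x) := by
  simp only [he.fourier_mul_conj_fourier]
  rw [Finset.sum_comm, Finset.mul_sum]
  refine Finset.sum_congr rfl fun x _ => ?_
  rw [Finset.sum_comm]
  simp_rw [← Finset.mul_sum, horth, sub_eq_zero]
  simp [mul_comm]

lemma sum_norm_sq_fourier [Fintype H] [DecidableEq G]
    (horth : ∀ x : G, ∑ ξ : H, e x ξ = if x = 0 then (Fintype.card G : ℂ) else 0)
    (f : G → ℂ) :
    ∑ ξ, ‖fourier e f ξ‖ ^ 2 = Fintype.card G * ∑ x, ‖f x‖ ^ 2 := by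
  have h := he.sum_fourier_mul_conj horth f f
  simp only [Complex.mul_conj'] at h
  rw [← Complex.ofReal_inj]
  push_cast
  exact h

lemma fourier_mul_fourierInv [Fintype H] (f : G → ℂ) (ν : H → ℂ) (ξ : H) :
    fourier e (fun x => f x * fourierInv e ν x) ξ = ∑ η, ν η * fourier e f (ξ - η) := by
  simp only [fourier, fourierInv, Finset.sum_mul, Finset.mul_sum]
  rw [Finset.sum_comm]
  refine Finset.sum_congr rfl fun η _ => Finset.sum_congr rfl fun x _ => ?_
  rw [sub_eq_add_neg, he.map_add_right, he.map_neg_right, neg_neg]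
  ring

lemma norm_fourier_le_sum_norm (f : G → ℂ) (ξ : H) : ‖fourier e f ξ‖ ≤ ∑ x, ‖f x‖ :=
  (norm_sum_le _ _).trans_eq (by simp only [norm_mul, he.norm_eq_one, mul_one])

lemma sum_weight_mul_norm_sq_fourier [Fintype H] (ν : H → ℂ) (g : G → ℂ) :
    ∑ ζ, ν ζ * (‖fourier e g ζ‖ : ℂ) ^ 2 = ∑ y, conj (g y) * conv g (fourierInv e ν) y := by
  simp only [← Complex.mul_conj', he.fourier_mul_conj_fourier, conv, fourierInv, Finset.mul_sum]
  conv_lhs =>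
    rw [Finset.sum_comm]
    enter [2, x]
    rw [Finset.sum_comm]
  rw [Finset.sum_comm]
  exact Finset.sum_congr rfl fun y _ => Finset.sum_congr rfl fun x _ =>
    Finset.sum_congr rfl fun ζ _ => by ring

lemma sum_conj_mul_conv [Fintype H] [DecidableEq G]
    (horth : ∀ x : G, ∑ ξ : H, e x ξ = if x = 0 then (Fintype.card G : ℂ) else 0)
    (g K : G → ℂ) :
    ∑ y, conj (g y) * conv g K y
      = (Fintype.card G : ℂ)⁻¹ * ∑ ξ, fourier e K ξ * (‖fourier e g ξ‖ : ℂ) ^ 2 := by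
  have hG : (Fintype.card G : ℂ) ≠ 0 := by exact_mod_cast Fintype.card_ne_zero
  simp_rw [eq_inv_mul_iff_mul_eq₀ hG, mul_comm (conj _), ← he.sum_fourier_mul_conj horth,
    he.fourier_conv, ← Complex.mul_conj']
  exact Finset.sum_congr rfl fun ξ _ => by ring

lemma sum_norm_sq_conv [Fintype H] [DecidableEq G]
    (horth : ∀ x : G, ∑ ξ : H, e x ξ = if x = 0 then (Fintype.card G : ℂ) else 0)
    (f K : G → ℂ) :
    ∑ x, ‖conv f K x‖ ^ 2
      = (Fintype.card G : ℝ)⁻¹ * ∑ ξ, ‖fourier e f ξ‖ ^ 2 * ‖fourier e K ξ‖ ^ 2 := by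
  have hG : (Fintype.card G : ℝ) ≠ 0 := by exact_mod_cast Fintype.card_ne_zero
  simp only [← mul_pow, ← norm_mul, ← he.fourier_conv, he.sum_norm_sq_fourier horth]
  field_simp

lemma norm_sum_conj_mul_conv_le_of_norm_fourier_le [Fintype H] [DecidableEq G]
    (horth : ∀ x : G, ∑ ξ : H, e x ξ = if x = 0 then (Fintype.card G : ℂ) else 0)
    {K : G → ℂ} {M : ℝ} (hK : ∀ ξ, ‖fourier e K ξ‖ ≤ M) (g : G → ℂ) :
    ‖∑ y, conj (g y) * conv g K y‖ ≤ M * ∑ x, ‖g x‖ ^ 2 := by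
  have hG : (0 : ℝ) < Fintype.card G := by exact_mod_cast Fintype.card_pos
  rw [he.sum_conj_mul_conv horth, norm_mul, norm_inv, Complex.norm_natCast]
  calc (Fintype.card G : ℝ)⁻¹ * ‖∑ ξ, fourier e K ξ * (‖fourier e g ξ‖ : ℂ) ^ 2‖
      ≤ (Fintype.card G : ℝ)⁻¹ * ∑ ξ, M * ‖fourier e g ξ‖ ^ 2 := by
        gcongr
        refine (norm_sum_le _ _).trans (Finset.sum_le_sum fun ξ _ => ?_)
        rw [norm_mul, norm_pow, Complex.norm_real, norm_norm]
        gcongr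
        exact hK ξ
    _ = M * ∑ x, ‖g x‖ ^ 2 := by
        rw [← Finset.mul_sum, he.sum_norm_sq_fourier horth]
        field_simp

lemma sum_weight_mul_norm_sq_fourier_le [Fintype H] [DecidableEq G]
    (horth : ∀ x : G, ∑ ξ : H, e x ξ = if x = 0 then (Fintype.card G : ℂ) else 0)
    {w : H → ℝ} {K₁ K₂ : G → ℂ} (hsplit : fourierInv e (fun ξ => (w ξ : ℂ)) = K₁ + K₂)
    {M₁ M₂ : ℝ} (hK₁ : ∀ ξ, ‖fourier e K₁ ξ‖ ≤ M₁) (hK₂ : ∀ x, ‖K₂ x‖ ≤ M₂) (g : G → ℂ) :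
    ∑ ζ, w ζ * ‖fourier e g ζ‖ ^ 2 ≤ M₁ * ∑ x, ‖g x‖ ^ 2 + M₂ * (∑ x, ‖g x‖) ^ 2 := by
  have hcast : ((∑ ζ, w ζ * ‖fourier e g ζ‖ ^ 2 : ℝ) : ℂ)
      = ∑ y, conj (g y) * conv g K₁ y + ∑ y, conj (g y) * conv g K₂ y := by
    push_cast
    rw [he.sum_weight_mul_norm_sq_fourier, hsplit, conv_add, ← Finset.sum_add_distrib]
    simp only [Pi.add_apply, mul_add]
  calc ∑ ζ, w ζ * ‖fourier e g ζ‖ ^ 2 ≤ ‖((∑ ζ, w ζ * ‖fourier e g ζ‖ ^ 2 : ℝ) : ℂ)‖ := by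
        rw [Complex.norm_real]
        exact Real.le_norm_self _
    _ ≤ M₁ * ∑ x, ‖g x‖ ^ 2 + M₂ * (∑ x, ‖g x‖) ^ 2 := by
        rw [hcast]
        exact (norm_add_le _ _).trans (add_le_add
          (he.norm_sum_conj_mul_conv_le_of_norm_fourier_le horth hK₁ g)
          (norm_sum_conj_mul_conv_le hK₂ g))

lemma sum_weight_mul_norm_sq_fourier_le_of_cutoff [Fintype H] [DecidableEq G]
    (horth : ∀ x : G, ∑ ξ : H, e x ξ = if x = 0 then (Fintype.card G : ℂ) else 0)
    {w : H → ℝ} {φ : G → ℝ} {S : Set G} {M D : ℝ}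
    (hφ_one : ∀ x ∈ S, φ x = 1) (hφ : ∀ x, |φ x| ≤ 1) (hD : 0 ≤ D)
    (hlow : ∀ ξ, ‖fourier e (fun x => (φ x : ℂ) * fourierInv e (fun ζ => (w ζ : ℂ)) x) ξ‖ ≤ M)
    (hhigh : ∀ x ∉ S, ‖fourierInv e (fun ζ => (w ζ : ℂ)) x‖ ≤ D) (g : G → ℂ) :
    ∑ ζ, w ζ * ‖fourier e g ζ‖ ^ 2 ≤ M * ∑ x, ‖g x‖ ^ 2 + 2 * D * (∑ x, ‖g x‖) ^ 2 := by
  refine he.sum_weight_mul_norm_sq_fourier_le horth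
    (K₂ := fun x => (1 - (φ x : ℂ)) * fourierInv e (fun ζ => (w ζ : ℂ)) x)
    (by ext x; simp only [Pi.add_apply]; ring) hlow (fun x => ?_) g
  by_cases hx : x ∈ S
  · simp [hφ_one x hx, hD]
  · rw [norm_mul]
    refine mul_le_mul ((norm_sub_le _ _).trans ?_) (hhigh x hx) (norm_nonneg _) zero_le_two
    rw [norm_one, Complex.norm_real, Real.norm_eq_abs]
    linarith [hφ x]

lemma norm_fourier_mul_fourierInv_le_sum [Fintype H] {w : H → ℝ} (hw : ∀ ξ, 0 ≤ w ξ)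
    (φ : G → ℂ) (ξ : H) :
    ‖fourier e (fun x => φ x * fourierInv e (fun ζ => (w ζ : ℂ)) x) ξ‖
      ≤ ∑ η, w η * ‖fourier e φ (ξ - η)‖ := by
  rw [he.fourier_mul_fourierInv]
  refine (norm_sum_le _ _).trans_eq (Finset.sum_congr rfl fun η _ => ?_)
  rw [norm_mul, Complex.norm_real, Real.norm_of_nonneg (hw η)]

lemma norm_fourier_mul_fourierInv_le [Fintype H] {BH : ℝ → Set H}
    (hBHmono : ∀ ρ ρ' : ℝ, 0 < ρ → ρ ≤ ρ' → BH ρ ⊆ BH ρ')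
    (hBHcov : ∀ ξ : H, ∃ ρ : ℝ, 0 < ρ ∧ ξ ∈ BH ρ)
    {w : H → ℝ} (hw : ∀ ξ, 0 ≤ w ξ) {n a A C₁ C₂ ρ : ℝ} (han : a < n)
    (hA : 0 ≤ A) (hC₁ : 0 ≤ C₁) (hC₂ : 0 ≤ C₂) (hρ : 0 < ρ)
    (hFmu : ∀ s : ℝ, 0 < s → ∀ ξ : H,
      ∑ η : H, Set.indicator (BH s) (fun _ => (1 : ℝ)) (η - ξ) * w η ≤ A * s ^ a)
    {φ : G → ℝ} (hφ : ∑ x, |φ x| ≤ C₁ * (2 * ρ) ^ n)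
    (hφdecay : ∀ s : ℝ, 1 / ρ ≤ s → ∀ ξ : H, -ξ ∉ BH s →
      ‖fourier e (fun x => (φ x : ℂ)) ξ‖ ≤ C₂ * s ^ (-n)) (ξ : H) :
    ‖fourier e (fun x => (φ x : ℂ) * fourierInv e (fun ζ => (w ζ : ℂ)) x) ξ‖
      ≤ 2 ^ n / (1 - 2 ^ (a - n)) * (C₁ + C₂) * A * ρ ^ (n - a) := by
  refine (he.norm_fourier_mul_fourierInv_le_sum hw _ ξ).trans <|
    sum_mul_le_of_dyadic_decay hBHmono hBHcov hw han hA (by positivity) hρ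
      (fun s hs => hFmu s hs ξ) (fun η => ?_) (fun s hs η hη => ?_)
  · calc ‖fourier e (fun x => (φ x : ℂ)) (ξ - η)‖ ≤ ∑ x, |φ x| := by
          simpa using he.norm_fourier_le_sum_norm (fun x => (φ x : ℂ)) (ξ - η)
      _ ≤ (C₁ + C₂) * (2 * ρ) ^ n := hφ.trans (by gcongr; linarith)
  · have hs0 : 0 < s := lt_of_lt_of_le (by positivity) hs
    exact (hφdecay s hs _ (by rwa [neg_sub])).trans
      (mul_le_mul_of_nonneg_right (by linarith) (Real.rpow_nonneg hs0.le _))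

lemma sum_weight_mul_norm_sq_fourier_indicator_le [Fintype H] [DecidableEq G]
    (horth : ∀ x : G, ∑ ξ : H, e x ξ = if x = 0 then (Fintype.card G : ℂ) else 0)
    {w : H → ℝ} {BG : ℝ → Set G} {φ : ℝ → G → ℝ} {n a b B M θ : ℝ} (han : a < n) (hb : 0 < b)
    (hB : 0 ≤ B) (hM : 0 ≤ M) (hθ : θ = 2 * (n - a) / (2 * (n - a) + b))
    (hφ_one : ∀ ρ : ℝ, 0 < ρ → ∀ x ∈ BG ρ, φ ρ x = 1) (hφ_le : ∀ (ρ : ℝ) (x : G), |φ ρ x| ≤ 1)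
    (hlow : ∀ ρ : ℝ, 0 < ρ → ∀ ξ,
      ‖fourier e (fun x => (φ ρ x : ℂ) * fourierInv e (fun ζ => (w ζ : ℂ)) x) ξ‖ ≤ M * ρ ^ (n - a))
    (hRmu : ∀ ρ : ℝ, 0 < ρ → ∀ x : G, x ∉ BG ρ →
      ‖fourierInv e (fun ζ => (w ζ : ℂ)) x‖ ≤ B * ρ ^ (-b / 2))
    (E : Set G) (τ : H) :
    ∑ ζ, w ζ * ‖fourier e (fun x => E.indicator (fun _ => (1 : ℂ)) x * e (-x) τ) ζ‖ ^ 2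
      ≤ 2 * (M * E.ncard) ^ (1 - θ) * (2 * B * (E.ncard : ℝ) ^ 2) ^ θ := by
  set g : G → ℂ := fun x => E.indicator (fun _ => (1 : ℂ)) x * e (-x) τ
  have hg₁ : ∑ x, ‖g x‖ = E.ncard := by
    simpa only [pow_one] using sum_norm_indicator_mul (E := E) (fun x => he.norm_eq_one (-x) τ) 1
      one_ne_zero
  have hg₂ : ∑ x, ‖g x‖ ^ 2 = E.ncard :=
    sum_norm_indicator_mul (fun x => he.norm_eq_one (-x) τ) 2 two_ne_zero
  have hden : 0 < 2 * (n - a) + b := by linarith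
  have hα : (n - a) / (n - a + b / 2) = θ := by
    rw [hθ, div_eq_div_iff (by linarith) hden.ne']
    ring
  have hβ : b / 2 / (n - a + b / 2) = 1 - θ := by
    rw [hθ, eq_sub_iff_add_eq, div_add_div _ _ (by linarith) hden.ne',
      div_eq_one_iff_eq (by positivity)]
    ring
  rw [← hβ, ← hα]
  refine le_two_mul_rpow_mul_rpow_of_forall_le (sub_pos.2 han) (half_pos hb) (by positivity)
    (by positivity) fun ρ hρ => ?_
  refine (he.sum_weight_mul_norm_sq_fourier_le_of_cutoff horth (hφ_one ρ hρ) (hφ_le ρ)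
    (by positivity) (hlow ρ hρ) (hRmu ρ hρ) g).trans_eq ?_
  rw [hg₁, hg₂, neg_div]
  ring

lemma sum_norm_sq_conv_le [Fintype H] [DecidableEq G]
    (horth : ∀ x : G, ∑ ξ : H, e x ξ = if x = 0 then (Fintype.card G : ℂ) else 0)
    {w : H → ℝ} (hw : ∀ ξ, 0 ≤ w ξ) (f φ : G → ℂ) {M R C₃ : ℝ}
    (hM : ∀ ξ, ‖fourier e (fun x => φ x * fourierInv e (fun ζ => (w ζ : ℂ)) x) ξ‖ ≤ M)
    (hR : ∀ τ, ∑ ζ, w ζ * ‖fourier e (fun x => f x * e (-x) τ) ζ‖ ^ 2 ≤ R)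
    (hC₃ : (Fintype.card G : ℝ)⁻¹ * ∑ ξ, ‖fourier e φ ξ‖ ≤ C₃) :
    ∑ x, ‖conv f (fun z => φ z * fourierInv e (fun ζ => (w ζ : ℂ)) z) x‖ ^ 2 ≤ M * R * C₃ := by
  set K : G → ℂ := fun z => φ z * fourierInv e (fun ζ => (w ζ : ℂ)) z
  have hM0 : 0 ≤ M := (norm_nonneg _).trans (hM 0)
  have hR0 : 0 ≤ R :=
    (Finset.sum_nonneg fun ζ _ => mul_nonneg (hw ζ) (sq_nonneg _)).trans (hR 0)
  have hK : ∀ ξ, ‖fourier e K ξ‖ ^ 2 ≤ M * ∑ η, w η * ‖fourier e φ (ξ - η)‖ := fun ξ => by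
    rw [sq]
    exact mul_le_mul (hM ξ) (he.norm_fourier_mul_fourierInv_le_sum hw φ ξ) (norm_nonneg _) hM0
  simp only [he.fourier_modulate] at hR
  calc ∑ x, ‖conv f K x‖ ^ 2
      = (Fintype.card G : ℝ)⁻¹ * ∑ ξ, ‖fourier e f ξ‖ ^ 2 * ‖fourier e K ξ‖ ^ 2 :=
        he.sum_norm_sq_conv horth f K
    _ ≤ (Fintype.card G : ℝ)⁻¹ * ∑ ξ, ‖fourier e f ξ‖ ^ 2 *
          (M * ∑ η, w η * ‖fourier e φ (ξ - η)‖) := by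
        gcongr with ξ
        exact hK ξ
    _ = (Fintype.card G : ℝ)⁻¹ * M * ∑ τ, ‖fourier e φ τ‖ *
          ∑ ζ, w ζ * ‖fourier e f (ζ + τ)‖ ^ 2 := by
        simp_rw [mul_left_comm _ M, ← Finset.mul_sum]
        rw [sum_mul_sum_mul_sub (fun ξ => ‖fourier e f ξ‖ ^ 2) (fun τ => ‖fourier e φ τ‖) w]
        ring
    _ ≤ (Fintype.card G : ℝ)⁻¹ * M * ∑ τ, ‖fourier e φ τ‖ * R := by
        gcongr with τ
        exact hR τ
    _ = M * R * ((Fintype.card G : ℝ)⁻¹ * ∑ ξ, ‖fourier e φ ξ‖) := by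
        rw [← Finset.sum_mul]
        ring
    _ ≤ M * R * C₃ := by gcongr

end IsUnitBicharacter

end FinitePairing

open FinitePairing in
theorem stmt_16_general (n a b : ℝ) (hb : 0 < b) (han : a < n) :
    ∃ C : ℝ, 0 < C ∧
      ∀ C₁ C₂ C₃ A B : ℝ, 0 ≤ C₁ → 0 ≤ C₂ → 0 ≤ C₃ → 0 ≤ A → 0 ≤ B →
      ∀ (G H : Type) [AddCommGroup G] [Fintype G] [DecidableEq G]
        [AddCommGroup H] [Fintype H]
        (e : G → H → ℂ) (BG : ℝ → Set G) (BH : ℝ → Set H)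
        (φ : ℝ → G → ℝ) (w : H → ℝ),
        (∀ (x y : G) (ξ : H), e (x + y) ξ = e x ξ * e y ξ) →
        (∀ (x : G) (ξ η : H), e x (ξ + η) = e x ξ * e x η) →
        (∀ (x : G) (ξ : H), ‖e x ξ‖ = 1) →
        (∀ x : G, ∑ ξ : H, e x ξ = if x = 0 then (Fintype.card G : ℂ) else 0) →
        (∀ ρ ρ' : ℝ, 0 < ρ → ρ ≤ ρ' → BG ρ ⊆ BG ρ') →
        (∀ (ρ : ℝ) (x : G), x ∈ BG ρ → -x ∈ BG ρ) →
        (∀ x : G, ∃ ρ : ℝ, 0 < ρ ∧ x ∈ BG ρ) →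
        (∀ ρ ρ' : ℝ, 0 < ρ → ρ ≤ ρ' → BH ρ ⊆ BH ρ') →
        (∀ (ρ : ℝ) (ξ : H), ξ ∈ BH ρ → -ξ ∈ BH ρ) →
        (∀ ξ : H, ∃ ρ : ℝ, 0 < ρ ∧ ξ ∈ BH ρ) →
        (∀ ρ : ℝ, 0 < ρ → ((BG ρ).ncard : ℝ) ≤ C₁ * ρ ^ n) →
        (∀ ρ : ℝ, 0 < ρ → ∀ x ∈ BG ρ, φ ρ x = 1) →
        (∀ ρ : ℝ, 0 < ρ → ∀ x : G, φ ρ x ≠ 0 → x ∈ BG (2 * ρ)) →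
        (∀ (ρ : ℝ) (x : G), |φ ρ x| ≤ 1) →
        (∀ ρ : ℝ, 0 < ρ → ∀ s : ℝ, 1 / ρ ≤ s → ∀ ξ : H, -ξ ∉ BH s →
          ‖∑ x : G, (φ ρ x : ℂ) * e (-x) ξ‖ ≤ C₂ * s ^ (-n)) →
        (∀ ρ : ℝ, 0 < ρ →
          (Fintype.card G : ℝ)⁻¹ *
              ∑ ξ : H, ‖∑ x : G, (φ ρ x : ℂ) * e (-x) ξ‖ ≤ C₃) →
        (∀ ξ : H, 0 ≤ w ξ) →
        (∀ ρ : ℝ, 0 < ρ → ∀ ξ : H,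
          ∑ η : H, Set.indicator (BH ρ) (fun _ => (1 : ℝ)) (η - ξ) * w η ≤ A * ρ ^ a) →
        (∀ ρ : ℝ, 0 < ρ → ∀ x : G, x ∉ BG ρ →
          ‖∑ ξ : H, (w ξ : ℂ) * e x ξ‖ ≤ B * ρ ^ (-b / 2)) →
        ∀ ρ : ℝ, 0 < ρ → ∀ E : Set G,
          ∑ x : G, ‖∑ y : G, Set.indicator E (fun _ => (1 : ℂ)) y *
              ((φ ρ (x - y) : ℂ) * ∑ ξ : H, (w ξ : ℂ) * e (x - y) ξ)‖ ^ 2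
            ≤ C * (C₁ + C₂) ^ (2 - 2 * (n - a) / (2 * (n - a) + b)) * C₃ *
                A ^ (2 - 2 * (n - a) / (2 * (n - a) + b)) *
                B ^ (2 * (n - a) / (2 * (n - a) + b)) *
                (E.ncard : ℝ) ^ (2 * (4 * (n - a) + b) / (4 * (n - a) + 2 * b)) *
                ρ ^ (n - a) := by
  set θ : ℝ := 2 * (n - a) / (2 * (n - a) + b) with hθ
  have hθ0 : 0 ≤ θ := div_nonneg (by linarith) (by linarith)
  have hθ1 : θ ≤ 1 := (div_le_one (by linarith)).2 (by linarith)
  set cA : ℝ := 2 ^ n / (1 - 2 ^ (a - n))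
  have hcA : 0 < cA := div_pos (by positivity)
    (sub_pos.2 (Real.rpow_lt_one_of_one_lt_of_neg one_lt_two (by linarith)))
  refine ⟨2 ^ (1 + θ) * cA ^ (2 - θ), by positivity, ?_⟩
  intro C₁ C₂ C₃ A B hC₁ hC₂ hC₃ hA hB G H _ _ _ _ _ e BG BH φ w hmul hmulH habs horth _ _ _
    hBHmono _ hBHcov hBGcard hφ_one hφ_supp hφ_le hφ_decay hφ_L1 hw hFmu hRmu ρ hρ E
  have he : IsUnitBicharacter e := ⟨hmul, hmulH, habs⟩
  have hlow : ∀ ρ : ℝ, 0 < ρ → ∀ ξ,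
      ‖fourier e (fun x => (φ ρ x : ℂ) * fourierInv e (fun ζ => (w ζ : ℂ)) x) ξ‖
        ≤ cA * (C₁ + C₂) * A * ρ ^ (n - a) := fun ρ hρ =>
    he.norm_fourier_mul_fourierInv_le hBHmono hBHcov hw han hA hC₁ hC₂ hρ hFmu
      ((sum_abs_le_ncard (hφ_supp ρ hρ) (hφ_le ρ)).trans (hBGcard _ (by positivity)))
      (hφ_decay ρ hρ)
  have hexp : 2 * (4 * (n - a) + b) / (4 * (n - a) + 2 * b) = 1 + θ := by
    rw [hθ, one_add_div (by linarith), div_eq_div_iff (by linarith) (by linarith)]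
    ring
  calc _ ≤ cA * (C₁ + C₂) * A * ρ ^ (n - a)
        * (2 * (cA * (C₁ + C₂) * A * E.ncard) ^ (1 - θ) * (2 * B * (E.ncard : ℝ) ^ 2) ^ θ) * C₃ :=
        he.sum_norm_sq_conv_le horth hw _ _ (hlow ρ hρ)
          (he.sum_weight_mul_norm_sq_fourier_indicator_le horth han hb hB (by positivity) hθ
            hφ_one hφ_le hlow hRmu E) (hφ_L1 ρ hρ)
    _ = _ := by
        rw [restriction_bound_eq hcA.le (by positivity) hA hB (by positivity) hθ0 hθ1, hexp]

theorem stmt_16 (n a b : ℝ) (hb : 0 < b) (hba : b ≤ a) (han : a < n) :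
    ∃ C : ℝ, 0 < C ∧
      ∀ C₁ C₂ C₃ A B : ℝ, 0 ≤ C₁ → 0 ≤ C₂ → 0 ≤ C₃ → 0 ≤ A → 0 ≤ B →
      ∀ (G H : Type) [AddCommGroup G] [Fintype G] [DecidableEq G]
        [AddCommGroup H] [Fintype H]
        (e : G → H → ℂ) (BG : ℝ → Set G) (BH : ℝ → Set H)
        (φ : ℝ → G → ℝ) (w : H → ℝ),
        (∀ (x y : G) (ξ : H), e (x + y) ξ = e x ξ * e y ξ) →
        (∀ (x : G) (ξ η : H), e x (ξ + η) = e x ξ * e x η) →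
        (∀ (x : G) (ξ : H), ‖e x ξ‖ = 1) →
        (∀ x : G, ∑ ξ : H, e x ξ = if x = 0 then (Fintype.card G : ℂ) else 0) →
        (∀ ρ ρ' : ℝ, 0 < ρ → ρ ≤ ρ' → BG ρ ⊆ BG ρ') →
        (∀ (ρ : ℝ) (x : G), x ∈ BG ρ → -x ∈ BG ρ) →
        (∀ x : G, ∃ ρ : ℝ, 0 < ρ ∧ x ∈ BG ρ) →
        (∀ ρ ρ' : ℝ, 0 < ρ → ρ ≤ ρ' → BH ρ ⊆ BH ρ') →
        (∀ (ρ : ℝ) (ξ : H), ξ ∈ BH ρ → -ξ ∈ BH ρ) →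
        (∀ ξ : H, ∃ ρ : ℝ, 0 < ρ ∧ ξ ∈ BH ρ) →
        (∀ ρ : ℝ, 0 < ρ → ((BG ρ).ncard : ℝ) ≤ C₁ * ρ ^ n) →
        (∀ ρ : ℝ, 0 < ρ → ∀ x ∈ BG ρ, φ ρ x = 1) →
        (∀ ρ : ℝ, 0 < ρ → ∀ x : G, φ ρ x ≠ 0 → x ∈ BG (2 * ρ)) →
        (∀ (ρ : ℝ) (x : G), |φ ρ x| ≤ 1) →
        (∀ ρ : ℝ, 0 < ρ → ∀ s : ℝ, 1 / ρ ≤ s → ∀ ξ : H, -ξ ∉ BH s →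
          ‖∑ x : G, (φ ρ x : ℂ) * e (-x) ξ‖ ≤ C₂ * s ^ (-n)) →
        (∀ ρ : ℝ, 0 < ρ →
          (Fintype.card G : ℝ)⁻¹ *
              ∑ ξ : H, ‖∑ x : G, (φ ρ x : ℂ) * e (-x) ξ‖ ≤ C₃) →
        (∀ ξ : H, 0 ≤ w ξ) →
        (∀ ρ : ℝ, 0 < ρ → ∀ ξ : H,
          ∑ η : H, Set.indicator (BH ρ) (fun _ => (1 : ℝ)) (η - ξ) * w η ≤ A * ρ ^ a) →
        (∀ ρ : ℝ, 0 < ρ → ∀ x : G, x ∉ BG ρ →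
          ‖∑ ξ : H, (w ξ : ℂ) * e x ξ‖ ≤ B * ρ ^ (-b / 2)) →
        ∀ ρ : ℝ, 0 < ρ → ∀ E : Set G,
          ∑ x : G, ‖∑ y : G, Set.indicator E (fun _ => (1 : ℂ)) y *
              ((φ ρ (x - y) : ℂ) * ∑ ξ : H, (w ξ : ℂ) * e (x - y) ξ)‖ ^ 2
            ≤ C * (C₁ + C₂) ^ (2 - 2 * (n - a) / (2 * (n - a) + b)) * C₃ *
                A ^ (2 - 2 * (n - a) / (2 * (n - a) + b)) *
                B ^ (2 * (n - a) / (2 * (n - a) + b)) *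
                (E.ncard : ℝ) ^ (2 * (4 * (n - a) + b) / (4 * (n - a) + 2 * b)) *
                ρ ^ (n - a) :=
  stmt_16_general n a b hb han
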